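/- In the full variable gadget for y ∈ Y (all 10 nodes present), the maximum total number of gadget nodes coverable by vertex-disjoint directed cycles of length at most 3 inside the gadget is 8, attained by the consistent packings: either the 3-cycles {α_{y,i}, β_{y,f,i}, φ_{y,i}}, i=1,2, together with the 2-cycle {τ_{y,1}, τ_{y,2}}, or symmetrically the 3-cycles {α_{y,i}, β_{y,t,i}, τ_{y,i}}, i=1,2, together with the 2-cycle {φ_{y,1}, φ_{y,2}}. -/

import Mathlib

variable {V : Type*} [DecidableEq V]

/-- A directed (simple) cycle given as a list of distinct vertices. -/
def IsDicycle (A : V → V → Prop) (c : List V) : Prop :=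
  2 ≤ c.length ∧ c.Nodup ∧ c.Chain' A ∧
    ∀ h : c ≠ [], A (c.getLast h) (c.head h)

def cycVerts (c : List V) : Set V := {v | v ∈ c}

/-- A `K`-cycle packing inside the vertex set `W`. -/
def IsCyclePackingOn (A : V → V → Prop) (K : ℕ) (W : Set V) (P : Finset (List V)) : Prop :=
  (∀ c ∈ P, IsDicycle A c ∧ c.length ≤ K ∧ ∀ v ∈ c, v ∈ W) ∧
  (P : Set (List V)).Pairwise fun c d => ∀ v, v ∈ c → v ∉ d

def packSize (P : Finset (List V)) : ℕ := ∑ c ∈ P, c.length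

def pcovered (P : Finset (List V)) : Set V := {v | ∃ c ∈ P, v ∈ c}

/-- Maximum size of a `K`-cycle packing on `G[W]`. -/
noncomputable def wDir (A : V → V → Prop) (K : ℕ) (W : Set V) : ℕ :=
  sSup {n | ∃ P, IsCyclePackingOn A K W P ∧ packSize P = n}

/-- Minimum number of `L`-nodes covered over all maximum `K`-cycle packings on `G[W]`. -/
noncomputable def wLDir (A : V → V → Prop) (K : ℕ) (L W : Set V) : ℕ :=
  sInf {k | ∃ P, IsCyclePackingOn A K W P ∧ packSize P = wDir A K W ∧
    (pcovered P ∩ L).ncard = k}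

/-- The ten nodes of the variable gadget for `y ∈ Y`. -/
inductive YG : Type
  | tau1 | tau2 | phi1 | phi2 | al1 | al2 | bt1 | bt2 | bf1 | bf2
deriving DecidableEq

open YG in
instance : Fintype YG where
  elems := {tau1, tau2, phi1, phi2, al1, al2, bt1, bt2, bf1, bf2}
  complete := by intro x; cases x <;> simp

open YG in
/-- The arc set `A_y` of the `y`-gadget. -/
def yArc : YG → YG → Prop := fun u v =>
  (u, v) ∈ ({(al1, bt1), (bt1, tau1), (tau1, al1), (al2, bt2), (bt2, tau2), (tau2, al2),
             (al1, bf1), (bf1, phi1), (phi1, al1), (al2, bf2), (bf2, phi2), (phi2, al2),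
             (tau1, tau2), (tau2, tau1), (phi1, phi2), (phi2, phi1)} : Set (YG × YG))

/-- `P` contains a cycle whose vertex set is exactly `s`. -/
def hasCyc (P : Finset (List YG)) (s : Set YG) : Prop := ∃ c ∈ P, cycVerts c = s

/-
Every dicycle of length at most 3 in the gadget is one of the four triangles `α_i β_{t,i} τ_i`,
`α_i β_{f,i} φ_i` or one of the 2-cycles `τ_1 τ_2`, `φ_1 φ_2`. The two triangles through `α_i`
meet, and the `τ` (`φ`) 2-cycle meets both `τ` (`φ`) triangles, so a packing has at most two
triangles and one 2-cycle, i.e. covers at most 8 nodes; covering 8 forces one 2-cycle together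
with the two triangles avoiding it.
-/

section Packing

variable {α : Type*} {A : α → α → Prop}

theorem isDicycle_pair_iff {a b : α} : IsDicycle A [a, b] ↔ a ≠ b ∧ A a b ∧ A b a := by
  change _ ∧ _ ∧ List.IsChain A [a, b] ∧ _ ↔ _
  simp

theorem isDicycle_triple_iff {a b d : α} :
    IsDicycle A [a, b, d] ↔ [a, b, d].Nodup ∧ A a b ∧ A b d ∧ A d a := by
  change _ ∧ _ ∧ List.IsChain A [a, b, d] ∧ _ ↔ _
  simp [List.isChain_cons_cons]
  tauto

theorem IsDicycle.ne_nil {c : List α} (hc : IsDicycle A c) : c ≠ [] := by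
  rintro rfl
  simp [IsDicycle] at hc

variable {K : ℕ} {W : Set α} {P : Finset (List α)}

theorem IsCyclePackingOn.injOn_toFinset [DecidableEq α] (hP : IsCyclePackingOn A K W P) :
    Set.InjOn List.toFinset (P : Set (List α)) := by
  intro c hc d hd hcd
  by_contra hne
  have hcne := (hP.1 c hc).1.ne_nil
  have hmem : c.head hcne ∈ d := by
    rw [← List.mem_toFinset, ← hcd, List.mem_toFinset]
    exact List.head_mem hcne
  exact hP.2 hc hd hne _ (List.head_mem hcne) hmem

theorem IsCyclePackingOn.packSize_eq_sum_card [DecidableEq α] (hP : IsCyclePackingOn A K W P) :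
    packSize P = ∑ s ∈ P.image List.toFinset, s.card := by
  rw [Finset.sum_image hP.injOn_toFinset, packSize]
  exact Finset.sum_congr rfl fun c hc => (List.toFinset_card_of_nodup (hP.1 c hc).1.2.1).symm

theorem IsCyclePackingOn.disjoint_of_mem_image [DecidableEq α] (hP : IsCyclePackingOn A K W P)
    {s t : Finset α} (hs : s ∈ P.image List.toFinset) (ht : t ∈ P.image List.toFinset)
    (hst : s ≠ t) : Disjoint s t := by
  obtain ⟨c, hc, rfl⟩ := Finset.mem_image.mp hs
  obtain ⟨d, hd, rfl⟩ := Finset.mem_image.mp ht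
  rw [Finset.disjoint_left]
  intro v hvc hvd
  exact hP.2 hc hd (fun h => hst (h ▸ rfl)) v (List.mem_toFinset.mp hvc)
    (List.mem_toFinset.mp hvd)

theorem wDir_eq_of_isGreatest {n : ℕ} (hn : ∃ P, IsCyclePackingOn A K W P ∧ packSize P = n)
    (hle : ∀ P, IsCyclePackingOn A K W P → packSize P ≤ n) : wDir A K W = n := by
  refine IsGreatest.csSup_eq ⟨hn, ?_⟩
  rintro _ ⟨P, hP, rfl⟩
  exact hle P hP

end Packing

theorem hasCyc_of_mem_image {P : Finset (List YG)} {s : Finset YG} {t : Set YG}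
    (hs : s ∈ P.image List.toFinset) (hst : (s : Set YG) = t) : hasCyc P t := by
  obtain ⟨c, hc, rfl⟩ := Finset.mem_image.mp hs
  exact ⟨c, hc, by rw [← hst]; ext; simp [cycVerts]⟩

open YG

instance : DecidableRel yArc := fun u v => by unfold yArc; infer_instance

def yCycleSupports : Finset (Finset YG) :=
  {{al1, bt1, tau1}, {al1, bf1, phi1}, {al2, bt2, tau2}, {al2, bf2, phi2},
   {tau1, tau2}, {phi1, phi2}}

theorem toFinset_mem_yCycleSupports {c : List YG} (hc : IsDicycle yArc c) (hK : c.length ≤ 3) :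
    c.toFinset ∈ yCycleSupports := by
  have pairs : ∀ a b, IsDicycle yArc [a, b] → [a, b].toFinset ∈ yCycleSupports := by
    simp only [isDicycle_pair_iff]; decide
  have triples : ∀ a b d, IsDicycle yArc [a, b, d] → [a, b, d].toFinset ∈ yCycleSupports := by
    simp only [isDicycle_triple_iff]; decide
  match c, hc.1, hK with
  | [a, b], _, _ => exact pairs a b hc
  | [a, b, d], _, _ => exact triples a b d hc

def bfSupports : Finset (Finset YG) := {{al1, bf1, phi1}, {al2, bf2, phi2}, {tau1, tau2}}

def btSupports : Finset (Finset YG) := {{al1, bt1, tau1}, {al2, bt2, tau2}, {phi1, phi2}}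

theorem sum_card_le_eight {Q : Finset (Finset YG)} (hQ : Q ⊆ yCycleSupports)
    (hdisj : ∀ s ∈ Q, ∀ t ∈ Q, s ≠ t → Disjoint s t) :
    ∑ s ∈ Q, s.card ≤ 8 ∧ (∑ s ∈ Q, s.card = 8 → bfSupports ⊆ Q ∨ btSupports ⊆ Q) := by
  have hsum : ∑ s ∈ Q, s.card = ∑ s ∈ yCycleSupports, if s ∈ Q then s.card else 0 := by
    rw [← Finset.sum_filter, Finset.filter_mem_eq_inter, Finset.inter_eq_right.mpr hQ]
  have excl : ∀ s t : Finset YG, ¬Disjoint s t → s ≠ t → ¬(s ∈ Q ∧ t ∈ Q) :=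
    fun s t hst hne ⟨hs, ht⟩ => hst (hdisj s hs t ht hne)
  have h₁ := excl {al1, bt1, tau1} {al1, bf1, phi1} (by decide) (by decide)
  have h₂ := excl {al2, bt2, tau2} {al2, bf2, phi2} (by decide) (by decide)
  have h₃ := excl {al1, bt1, tau1} {tau1, tau2} (by decide) (by decide)
  have h₄ := excl {al2, bt2, tau2} {tau1, tau2} (by decide) (by decide)
  have h₅ := excl {al1, bf1, phi1} {phi1, phi2} (by decide) (by decide)
  have h₆ := excl {al2, bf2, phi2} {phi1, phi2} (by decide) (by decide)
  rw [hsum]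
  simp only [yCycleSupports, bfSupports, btSupports, Finset.insert_subset_iff,
    Finset.singleton_subset_iff]
  rw [Finset.sum_insert (by decide), Finset.sum_insert (by decide), Finset.sum_insert (by decide),
    Finset.sum_insert (by decide), Finset.sum_insert (by decide), Finset.sum_singleton]
  split_ifs <;> simp_all

def bfPacking : Finset (List YG) := {[al1, bf1, phi1], [al2, bf2, phi2], [tau1, tau2]}

theorem bfPacking_isCyclePackingOn : IsCyclePackingOn yArc 3 Set.univ bfPacking := by
  refine ⟨fun c hc => ⟨?_, ?_, fun v _ => Set.mem_univ v⟩, ?_⟩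
  · simp only [bfPacking, Finset.mem_insert, Finset.mem_singleton] at hc
    rcases hc with rfl | rfl | rfl
    · exact isDicycle_triple_iff.mpr (by decide)
    · exact isDicycle_triple_iff.mpr (by decide)
    · exact isDicycle_pair_iff.mpr (by decide)
  · revert c; decide
  · have hdisj : ∀ c ∈ bfPacking, ∀ d ∈ bfPacking, c ≠ d → ∀ v ∈ c, v ∉ d := by decide
    exact fun c hc d hd => hdisj c hc d hd

theorem packSize_bfPacking : packSize bfPacking = 8 := by decide

theorem IsCyclePackingOn.image_toFinset_subset_yCycleSupports {W : Set YG} {P : Finset (List YG)}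
    (hP : IsCyclePackingOn yArc 3 W P) : P.image List.toFinset ⊆ yCycleSupports := by
  intro s hs
  obtain ⟨c, hc, rfl⟩ := Finset.mem_image.mp hs
  exact toFinset_mem_yCycleSupports (hP.1 c hc).1 (hP.1 c hc).2.1

theorem IsCyclePackingOn.packSize_le_eight {W : Set YG} {P : Finset (List YG)}
    (hP : IsCyclePackingOn yArc 3 W P) :
    packSize P ≤ 8 ∧ (packSize P = 8 →
      bfSupports ⊆ P.image List.toFinset ∨ btSupports ⊆ P.image List.toFinset) := by
  rw [hP.packSize_eq_sum_card]
  exact sum_card_le_eight hP.image_toFinset_subset_yCycleSupports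
    fun s hs t ht => hP.disjoint_of_mem_image hs ht

open YG in
/-- in the full `y`-gadget the maximum 3-cycle packing covers 8 nodes,
attained exactly by the two consistent packings. -/
theorem stmt8 :
    wDir yArc 3 (Set.univ : Set YG) = 8 ∧
    (∀ P, IsCyclePackingOn yArc 3 Set.univ P → packSize P = 8 →
      (hasCyc P {al1, bf1, phi1} ∧ hasCyc P {al2, bf2, phi2} ∧ hasCyc P {tau1, tau2}) ∨
      (hasCyc P {al1, bt1, tau1} ∧ hasCyc P {al2, bt2, tau2} ∧ hasCyc P {phi1, phi2})) := by
  refine ⟨wDir_eq_of_isGreatest ⟨bfPacking, bfPacking_isCyclePackingOn, packSize_bfPacking⟩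
    fun P hP => hP.packSize_le_eight.1, fun P hP h8 => ?_⟩
  rcases hP.packSize_le_eight.2 h8 with h | h
  · simp only [bfSupports, Finset.insert_subset_iff, Finset.singleton_subset_iff] at h
    exact Or.inl ⟨hasCyc_of_mem_image h.1 (by simp), hasCyc_of_mem_image h.2.1 (by simp),
      hasCyc_of_mem_image h.2.2 (by simp)⟩
  · simp only [btSupports, Finset.insert_subset_iff, Finset.singleton_subset_iff] at h
    exact Or.inr ⟨hasCyc_of_mem_image h.1 (by simp), hasCyc_of_mem_image h.2.1 (by simp),
      hasCyc_of_mem_image h.2.2 (by simp)⟩
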